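/- arXiv:1905.02890 — 3 statements merged into one kernel-verified Lean document; each statement's English description precedes it below -/
import Mathlib

section
/- Let H be a Hilbert space, z ∈ H, α > 0, and define T(u) = α z ⟨u, z⟩. Let S be a positive semi-definite bounded operator on H such that T + S is invertible. Then 0 ≤ ⟨(T+S)⁻¹ z, z⟩ ≤ 1/α. -/
open InnerProductSpace

/-! If `z = α ⟪z, w⟫ z + S w` with `S` symmetric and positive, pairing with `w` gives
`⟪w, z⟫ = α ‖⟪w, z⟫‖² + ⟪S w, w⟫`, a nonnegative real number `r` with `r = α r² + s`, `s ≥ 0`;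
hence `α r² ≤ r`, i.e. `r ≤ 1 / α`. Apply this to `w = (T + S)⁻¹ z`. -/

theorem nonneg_and_le_one_div_of_eq_mul_sq_add {α s r : ℝ} (hα : 0 < α) (hs : 0 ≤ s)
    (hr : r = α * r ^ 2 + s) : 0 ≤ r ∧ r ≤ 1 / α := by
  have hr_nonneg : 0 ≤ r := by rw [hr]; positivity
  refine ⟨hr_nonneg, ?_⟩
  rw [le_div_iff₀ hα]
  nlinarith [sq_nonneg (α * r - 1)]

theorem LinearMap.IsSymmetric.inner_eq_of_eq_rankOne_add {𝕜 E : Type*} [RCLike 𝕜]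
    [NormedAddCommGroup E] [InnerProductSpace 𝕜 E] {S : E →ₗ[𝕜] E} (hS : S.IsSymmetric)
    {z w : E} {α : ℝ} (h : z = (α : 𝕜) • (⟪z, w⟫_𝕜 • z) + S w) :
    ⟪w, z⟫_𝕜 = ((α * ‖⟪w, z⟫_𝕜‖ ^ 2 + RCLike.re ⟪S w, w⟫_𝕜 : ℝ) : 𝕜) := by
  conv_lhs => rw [h]
  rw [inner_add_right, inner_smul_right, inner_smul_right, ← inner_conj_symm z w,
    RCLike.conj_mul, ← hS w w, RCLike.ofReal_add, RCLike.ofReal_mul, RCLike.ofReal_pow,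
    hS.coe_re_inner_apply_self]

theorem stmt0_general
    {H : Type*} [NormedAddCommGroup H] [InnerProductSpace ℂ H] [CompleteSpace H]
    (z : H) (α : ℝ) (hα : 0 < α)
    (T S B : H →L[ℂ] H)
    (hT : ∀ u, T u = (α : ℂ) • (⟪z, u⟫_ℂ • z))
    (hSsa : IsSelfAdjoint S)
    (hSpos : ∀ u, 0 ≤ (⟪S u, u⟫_ℂ).re)
    (hB2 : (T + S).comp B = ContinuousLinearMap.id ℂ H) :
    (⟪B z, z⟫_ℂ).im = 0 ∧ 0 ≤ (⟪B z, z⟫_ℂ).re ∧ (⟪B z, z⟫_ℂ).re ≤ 1 / α := by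
  have hz : z = (α : ℂ) • (⟪z, B z⟫_ℂ • z) + S (B z) := by
    simpa [hT] using (congrArg (· z) hB2).symm
  set r := α * ‖⟪B z, z⟫_ℂ‖ ^ 2 + (⟪S (B z), B z⟫_ℂ).re
  have hr : ⟪B z, z⟫_ℂ = r := hSsa.isSymmetric.inner_eq_of_eq_rankOne_add hz
  have hr_eq : r = α * r ^ 2 + (⟪S (B z), B z⟫_ℂ).re := by
    rw [← sq_abs r, ← Real.norm_eq_abs, ← Complex.norm_real, ← hr]
  rw [hr, Complex.ofReal_im, Complex.ofReal_re]
  exact ⟨rfl, nonneg_and_le_one_div_of_eq_mul_sq_add hα (hSpos _) hr_eq⟩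

/-- Lemma 4.6: if `T u = α ⟨u,z⟩ z` and `S` is a positive semi-definite bounded
operator such that `T + S` is invertible (with bounded inverse `B`), then
`0 ≤ ⟨(T+S)⁻¹ z, z⟩ ≤ 1/α`. -/
theorem stmt0
    {H : Type*} [NormedAddCommGroup H] [InnerProductSpace ℂ H] [CompleteSpace H]
    (z : H) (α : ℝ) (hα : 0 < α)
    (T S B : H →L[ℂ] H)
    (hT : ∀ u, T u = (α : ℂ) • (⟪z, u⟫_ℂ • z))
    (hSsa : IsSelfAdjoint S)
    (hSpos : ∀ u, 0 ≤ (⟪S u, u⟫_ℂ).re)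
    (hB1 : B.comp (T + S) = ContinuousLinearMap.id ℂ H)
    (hB2 : (T + S).comp B = ContinuousLinearMap.id ℂ H) :
    (⟪B z, z⟫_ℂ).im = 0 ∧ 0 ≤ (⟪B z, z⟫_ℂ).re ∧ (⟪B z, z⟫_ℂ).re ≤ 1 / α :=
  stmt0_general z α hα T S B hT hSsa hSpos hB2
end

section
/- For λ > 0 and x ≠ y in ℝ³, the λ-derivative of the kernel R(λ)(x,y) = (e^{iλ|x-y|} − e^{-λ|x-y|})/(8π λ²|x-y|) satisfies |∂_λ R(λ)(x,y)| ≤ C/λ² uniformly in x, y. -/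
open Real Complex

noncomputable def freeKernel (lam : ℝ) (x y : EuclideanSpace ℝ (Fin 3)) : ℂ :=
  (Complex.exp (Complex.I * lam * ‖x - y‖) - Complex.exp (-(lam * ‖x - y‖ : ℝ))) /
    (8 * π * lam ^ 2 * ‖x - y‖)

/-!
With `r = |x - y|`, the λ-derivative of the kernel is
`(i e^{iλr} + e^{-λr}) / (8πλ²) - (e^{iλr} - e^{-λr}) / (4πλ³r)`.
The first term is at most `1/(4πλ²)` because both exponentials have modulus at most one.
In the second, the factor `1/r` is compensated by `|e^{iλr} - e^{-λr}| ≤ 2λr`, which holds since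
`s ↦ e^{is}` and `s ↦ e^{-s}` (for `s ≥ 0`) are `1`-Lipschitz and agree at `s = 0`.
Together this gives `C = 3/(4π)`.
-/

theorem Complex.norm_exp_I_mul_ofReal_sub_exp_neg_le {s : ℝ} (hs : 0 ≤ s) :
    ‖exp (I * s) - exp (-s)‖ ≤ 2 * s := by
  have hosc : ‖exp (I * s) - 1‖ ≤ s := by
    simpa [abs_of_nonneg hs] using Real.norm_exp_I_mul_ofReal_sub_one_le (x := s)
  have hdecay : ‖(1 : ℂ) - exp (-s)‖ ≤ s := by
    rw [← ofReal_neg, ← ofReal_exp, ← ofReal_one, ← ofReal_sub, norm_real, Real.norm_eq_abs,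
      abs_of_nonneg (by simpa using Real.exp_le_one_iff.mpr (neg_nonpos.mpr hs))]
    linarith [Real.one_sub_le_exp_neg s]
  calc ‖exp (I * s) - exp (-s)‖ = ‖(exp (I * s) - 1) + (1 - exp (-s))‖ := by ring_nf
    _ ≤ s + s := (norm_add_le _ _).trans (add_le_add hosc hdecay)
    _ = 2 * s := by ring

noncomputable def freeKernelRadial (r lam : ℝ) : ℂ :=
  (cexp (I * lam * r) - cexp (-(lam * r : ℝ))) / (8 * π * lam ^ 2 * r)

theorem hasDerivAt_freeKernelRadial {r lam : ℝ} (hr : r ≠ 0) (hlam : lam ≠ 0) :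
    HasDerivAt (freeKernelRadial r)
      ((I * cexp (I * lam * r) + cexp (-(lam * r : ℝ))) / (8 * π * lam ^ 2)
        - (cexp (I * lam * r) - cexp (-(lam * r : ℝ))) / (4 * π * lam ^ 3 * r)) lam := by
  have hosc : HasDerivAt (fun l : ℝ => I * l * r) (I * r) lam := by
    simpa using ((hasDerivAt_id (lam : ℂ)).comp_ofReal.const_mul I).mul_const (r : ℂ)
  have hdecay : HasDerivAt (fun l : ℝ => ((l * r : ℝ) : ℂ)) r lam := by
    simpa using ((hasDerivAt_id lam).mul_const r).ofReal_comp
  have hden : HasDerivAt (fun l : ℝ => (8 * π * l ^ 2 * r : ℂ)) (8 * π * (2 * lam) * r) lam := by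
    simpa using
      (((hasDerivAt_id (lam : ℂ)).comp_ofReal.pow 2).const_mul (8 * π : ℂ)).mul_const (r : ℂ)
  refine ((hosc.cexp.sub hdecay.neg.cexp).div hden (by simp [hr, hlam, pi_ne_zero])).congr_deriv ?_
  have hr' : (r : ℂ) ≠ 0 := ofReal_ne_zero.mpr hr
  have hlam' : (lam : ℂ) ≠ 0 := ofReal_ne_zero.mpr hlam
  simp only [Pi.sub_apply, Pi.neg_apply]
  field_simp
  ring

theorem norm_deriv_freeKernelRadial_le {r lam : ℝ} (hr : 0 < r) (hlam : 0 < lam) :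
    ‖deriv (freeKernelRadial r) lam‖ ≤ 3 / (4 * π) / lam ^ 2 := by
  rw [(hasDerivAt_freeKernelRadial hr.ne' hlam.ne').deriv]
  have hosc : ‖cexp (I * lam * r)‖ = 1 := by
    simpa [mul_assoc] using norm_exp_I_mul_ofReal (lam * r)
  have hdecay : ‖cexp (-(lam * r : ℝ))‖ ≤ 1 := by
    rw [← ofReal_neg, norm_exp_ofReal]
    exact Real.exp_le_one_iff.mpr (by nlinarith)
  have hdiff : ‖cexp (I * lam * r) - cexp (-(lam * r : ℝ))‖ ≤ 2 * (lam * r) := by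
    simpa [mul_assoc] using norm_exp_I_mul_ofReal_sub_exp_neg_le (s := lam * r) (by positivity)
  have hsum : ‖I * cexp (I * lam * r) + cexp (-(lam * r : ℝ))‖ ≤ 2 := by
    calc _ ≤ ‖I * cexp (I * lam * r)‖ + ‖cexp (-(lam * r : ℝ))‖ := norm_add_le _ _
      _ ≤ 1 + 1 := by rw [norm_mul, norm_I, hosc, one_mul]; gcongr
      _ = 2 := by norm_num
  have hden₁ : ‖(8 * π * lam ^ 2 : ℂ)‖ = 8 * π * lam ^ 2 := by
    simp [abs_of_pos pi_pos]
  have hden₂ : ‖(4 * π * lam ^ 3 * r : ℂ)‖ = 4 * π * lam ^ 3 * r := by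
    simp [abs_of_pos pi_pos, abs_of_pos hlam, abs_of_pos hr]
  calc _ ≤ 2 / (8 * π * lam ^ 2) + 2 * (lam * r) / (4 * π * lam ^ 3 * r) := by
        refine (norm_sub_le _ _).trans (add_le_add ?_ ?_) <;> rw [norm_div]
        · rw [hden₁]; gcongr
        · rw [hden₂]; gcongr
    _ = 3 / (4 * π) / lam ^ 2 := by field_simp; ring

/-- The λ-derivative of the kernel of the free fourth-order resolvent satisfies
the uniform bound `|∂_λ R(λ)(x,y)| ≤ C/λ²`. -/
theorem stmt3 :
    ∃ C : ℝ, 0 < C ∧ ∀ (lam : ℝ), 0 < lam →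
      ∀ x y : EuclideanSpace ℝ (Fin 3), x ≠ y →
        ‖deriv (fun l : ℝ => freeKernel l x y) lam‖ ≤ C / lam ^ 2 := by
  refine ⟨3 / (4 * π), by positivity, fun lam hlam x y hxy => ?_⟩
  have hr : 0 < ‖x - y‖ := norm_pos_iff.mpr (sub_ne_zero.mpr hxy)
  exact norm_deriv_freeKernelRadial_le hr hlam
end

section
/- Let Q be a bounded operator on L²(ℝ³) with absolutely bounded kernel satisfying Qv = 0 (i.e., ∫ Q(y₂,y₁)v(y₁)dy₁ = 0), where v(x) ≤ ⟨x⟩^{-5/2-ε}. Define F(p) = (e^{ip} − e^{-p})/p. Then for every λ > 0 and y ∈ ℝ³, the function y₂ ↦ (1/(8πλ)) ∫ Q(y₂,y₁) v(y₁) [F(λ|y−y₁|) − F(λ|y|)] dy₁ has L²-norm bounded uniformly in λ and y, i.e., sup_y ‖[Q v R⁺(H₀,λ⁴)](·,y)‖_{L²} ≲ 1. -/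
open MeasureTheory Real

noncomputable def Ffun (p : ℝ) : ℂ :=
  (Complex.exp (Complex.I * p) - Complex.exp (-(p : ℂ))) / p

/-!
Write `F̃` for the continuous extension of `F` (`F̃ 0 = 1 + i`). It is the average over `t ∈ [0, 1]`
of `i e^{ipt} + e^{-pt}`, hence `2`-Lipschitz on `[0, ∞)`, and so
`|F̃(λ|y - y₁|) - F̃(λ|y|)| ≤ 2λ|y₁|`. The integral over `y₁` is then at most
`∫ |Q(y₂, y₁)| 2λ|y₁| v(y₁) dy₁`, whose `L²` norm in `y₂` is `≲ λ ‖|·| v‖₂` since `Q` is absolutely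
bounded, and `1 / (8πλ)` absorbs the `λ`. For `y ≠ 0` the difference of the `F`s is that of the
`F̃`s off the null set `{y₁ = y}`; at `y = 0`, where `F 0` is the junk value `0`, the condition
`Qv = 0` lets one subtract `F̃ 0` instead.

Two points come from the junk values of the Bochner integral. Since `v` need not be measurable, it
is replaced by a measurable `W ≤ ⟨x⟩^{-5/2-ε}` which agrees with `v` wherever `g v` is measurable:
`W` is `v` on an a.e.-largest set on which `v` is measurable. And subtracting `F̃ 0` needs
`Q(y₂, ·) v` integrable for a.e. `y₂`: on balls this follows from `|F p| ≥ e^{-p}`, and globally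
from monotone convergence in the kernel bound applied to the truncations `W 1_{B_n}`.
-/

open scoped ENNReal

-- `Ffun 0` is the junk value `0`, while `Ffun p → 1 + i` as `p → 0`.
noncomputable def Fext (p : ℝ) : ℂ := if p = 0 then 1 + Complex.I else Ffun p

lemma Fext_of_ne_zero {p : ℝ} (hp : p ≠ 0) : Fext p = Ffun p := if_neg hp

@[fun_prop]
lemma measurable_Ffun : Measurable Ffun := by
  unfold Ffun; fun_prop

@[fun_prop]
lemma measurable_Fext : Measurable Fext :=
  Measurable.ite (MeasurableSet.singleton 0) measurable_const measurable_Ffun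

lemma exp_neg_le_norm_Ffun {p : ℝ} (hp : 0 < p) : Real.exp (-p) ≤ ‖Ffun p‖ := by
  have hnum : 1 - Real.exp (-p) ≤ ‖Complex.exp (Complex.I * p) - Complex.exp (-(p : ℂ))‖ := by
    have h := norm_sub_norm_le (Complex.exp (Complex.I * p)) (Complex.exp (-(p : ℂ)))
    simpa [Complex.norm_exp] using h
  have hp_exp : p * Real.exp (-p) ≤ 1 - Real.exp (-p) := by
    have h := Real.add_one_le_exp p
    have hinv : Real.exp p * Real.exp (-p) = 1 := by rw [← Real.exp_add]; simp
    nlinarith [Real.exp_pos (-p)]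
  rw [Ffun, norm_div, Complex.norm_real, Real.norm_of_nonneg hp.le, le_div_iff₀ hp]
  linarith

lemma one_le_exp_mul_norm_Ffun {p P : ℝ} (hp : 0 < p) (hpP : p ≤ P) :
    1 ≤ Real.exp P * ‖Ffun p‖ :=
  calc 1 = Real.exp P * Real.exp (-P) := by rw [← Real.exp_add]; simp
    _ ≤ Real.exp P * ‖Ffun p‖ := by
      gcongr
      exact (Real.exp_le_exp.2 (neg_le_neg hpP)).trans (exp_neg_le_norm_Ffun hp)

lemma Fext_eq_integral (p : ℝ) :
    Fext p = ∫ t in (0 : ℝ)..1,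
      (Complex.I * Complex.exp (Complex.I * p * t) + Complex.exp (-p * t)) := by
  rcases eq_or_ne p 0 with rfl | hp
  · simp [Fext, add_comm]
  have hp' : (p : ℂ) ≠ 0 := by exact_mod_cast hp
  have hIp : Complex.I * p ≠ 0 := mul_ne_zero Complex.I_ne_zero hp'
  rw [intervalIntegral.integral_add (Continuous.intervalIntegrable (by fun_prop) _ _)
      (Continuous.intervalIntegrable (by fun_prop) _ _),
    intervalIntegral.integral_const_mul, integral_exp_mul_complex hIp,
    integral_exp_mul_complex (neg_ne_zero.2 hp'), Fext_of_ne_zero hp, Ffun]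
  field_simp
  simp

lemma norm_exp_sub_exp_le {z w : ℂ} (hz : z.re ≤ 0) (hw : w.re ≤ 0) :
    ‖Complex.exp z - Complex.exp w‖ ≤ ‖z - w‖ := by
  have h := (convex_halfSpace_re_le (0 : ℝ)).norm_image_sub_le_of_norm_deriv_le
    (f := Complex.exp) (C := 1) (fun x _ => Complex.differentiableAt_exp)
    (fun x hx => by simpa [Complex.norm_exp] using hx) hw hz
  simpa using h

lemma norm_Fext_sub_le {a b : ℝ} (ha : 0 ≤ a) (hb : 0 ≤ b) :
    ‖Fext a - Fext b‖ ≤ 2 * |a - b| := by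
  rw [Fext_eq_integral, Fext_eq_integral, ← intervalIntegral.integral_sub
    (Continuous.intervalIntegrable (by fun_prop) _ _)
    (Continuous.intervalIntegrable (by fun_prop) _ _)]
  have hbound : ∀ t ∈ Set.uIoc (0 : ℝ) 1,
      ‖(Complex.I * Complex.exp (Complex.I * a * t) + Complex.exp (-a * t)) -
        (Complex.I * Complex.exp (Complex.I * b * t) + Complex.exp (-b * t))‖ ≤ 2 * |a - b| := by
    intro t ht
    rw [Set.uIoc_of_le zero_le_one] at ht
    have hdiff : ∀ z w : ℂ, ‖z * t - w * t‖ ≤ ‖z - w‖ := fun z w => by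
      rw [← sub_mul, norm_mul, Complex.norm_real, Real.norm_of_nonneg ht.1.le]
      exact mul_le_of_le_one_right (norm_nonneg _) ht.2
    have hosc : ‖Complex.exp (Complex.I * a * t) - Complex.exp (Complex.I * b * t)‖ ≤ |a - b| := by
      refine (norm_exp_sub_exp_le (by simp) (by simp)).trans ((hdiff _ _).trans ?_)
      rw [← mul_sub, norm_mul, Complex.norm_I, one_mul, ← Complex.ofReal_sub, Complex.norm_real,
        Real.norm_eq_abs]
    have hdecay : ‖Complex.exp (-a * t) - Complex.exp (-b * t)‖ ≤ |a - b| := by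
      refine (norm_exp_sub_exp_le ?_ ?_).trans ((hdiff _ _).trans ?_)
      · simpa using mul_nonneg ha ht.1.le
      · simpa using mul_nonneg hb ht.1.le
      rw [← neg_sub', norm_neg, ← Complex.ofReal_sub, Complex.norm_real, Real.norm_eq_abs]
    calc _ = ‖Complex.I * (Complex.exp (Complex.I * a * t) - Complex.exp (Complex.I * b * t)) +
          (Complex.exp (-a * t) - Complex.exp (-b * t))‖ := by ring_nf
      _ ≤ |a - b| + |a - b| := by
        refine (norm_add_le _ _).trans (add_le_add ?_ hdecay)
        rwa [norm_mul, Complex.norm_I, one_mul]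
      _ = 2 * |a - b| := by ring
  simpa using intervalIntegral.norm_integral_le_of_norm_le_const hbound

lemma norm_ofReal_mul_Fext_sub_le {E : Type*} [SeminormedAddCommGroup E] {w lam : ℝ}
    (hw : 0 ≤ w) (hlam : 0 ≤ lam) (z y : E) :
    ‖(w : ℂ) * (Fext (lam * ‖z - y‖) - Fext (lam * ‖z‖))‖ ≤ 2 * lam * ‖‖y‖ * w‖ := by
  rw [norm_mul, Complex.norm_real, Real.norm_of_nonneg hw,
    Real.norm_of_nonneg (mul_nonneg (norm_nonneg y) hw)]
  have hF : ‖Fext (lam * ‖z - y‖) - Fext (lam * ‖z‖)‖ ≤ 2 * lam * ‖y‖ := by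
    refine (norm_Fext_sub_le (by positivity) (by positivity)).trans ?_
    rw [← mul_sub, abs_mul, abs_of_nonneg hlam, mul_assoc]
    gcongr
    simpa using abs_norm_sub_norm_le (z - y) z
  calc w * _ ≤ w * (2 * lam * ‖y‖) := mul_le_mul_of_nonneg_left hF hw
    _ = 2 * lam * (‖y‖ * w) := by ring

section MeasurableProxy

variable {α : Type*} [MeasurableSpace α] {μ : Measure α}

lemma exists_ae_greatest_of_iUnion_mem [SFinite μ] {p : Set α → Prop} (h₀ : ∃ s, p s)
    (hm : ∀ s, p s → MeasurableSet s) (hU : ∀ s : ℕ → Set α, (∀ n, p (s n)) → p (⋃ n, s n)) :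
    ∃ N, p N ∧ ∀ s, p s → μ (s \ N) = 0 := by
  set ρ := μ.toFinite
  obtain ⟨u, -, hu_lim, hu_mem⟩ := exists_seq_tendsto_sSup
    ((h₀.elim fun s hs => ⟨ρ s, Set.mem_image_of_mem ρ hs⟩ : (ρ '' {s | p s}).Nonempty))
    (OrderTop.bddAbove _)
  choose s hs hsu using hu_mem
  have hN : p (⋃ n, s n) := hU s hs
  have hle : ∀ t, p t → ρ t ≤ ρ (⋃ n, s n) := fun t ht =>
    (le_csSup (OrderTop.bddAbove _) (Set.mem_image_of_mem ρ ht)).trans <|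
      le_of_tendsto' hu_lim fun n => hsu n ▸ measure_mono (Set.subset_iUnion s n)
  refine ⟨⋃ n, s n, hN, fun t ht => absolutelyContinuous_toFinite μ ?_⟩
  have hunion : (⋃ n : ℕ, if n = 0 then t else ⋃ n, s n) = t ∪ ⋃ n, s n := by
    ext x
    simp only [Set.mem_iUnion, Set.mem_union]
    exact ⟨fun ⟨n, h⟩ => by split_ifs at h; exacts [Or.inl h, Or.inr (Set.mem_iUnion.1 h)],
      fun h => h.elim (fun h => ⟨0, by simpa⟩) (fun h => ⟨1, by simpa using h⟩)⟩
  have htN := hle _ (hunion ▸ hU _ fun n => by split_ifs <;> assumption)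
  rw [← Set.union_sdiff_right, measure_sdiff Set.subset_union_right (hm _ hN).nullMeasurableSet
    (measure_ne_top _ _)]
  exact tsub_eq_zero_of_le htN

lemma exists_measurable_le_forall_mul_ae_eq [SFinite μ] {v V : α → ℝ} (hV : Measurable V)
    (hv : ∀ x, 0 ≤ v x ∧ v x ≤ V x) :
    ∃ W : α → ℝ, Measurable W ∧ (∀ x, 0 ≤ W x ∧ W x ≤ V x) ∧
      ∀ g : α → ℂ, Measurable g → AEStronglyMeasurable (fun x => g x * v x) μ →
        (fun x => g x * v x) =ᵐ[μ] fun x => g x * W x := by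
  set p : Set α → Prop := fun U =>
    MeasurableSet U ∧ AEMeasurable (U.indicator fun x => ENNReal.ofReal (v x)) μ
  obtain ⟨N, ⟨-, hN⟩, hmax⟩ := exists_ae_greatest_of_iUnion_mem (μ := μ) (p := p)
    ⟨∅, by simp [p]⟩ (fun _ h => h.1) fun s hs => ⟨.iUnion fun n => (hs n).1, by
      rw [funext (Set.indicator_iUnion_apply (M := ℝ≥0∞) rfl s _)]
      exact AEMeasurable.iSup fun n => (hs n).2⟩
  refine ⟨fun x => min (hN.mk _ x).toReal (V x), hN.measurable_mk.ennreal_toReal.min hV,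
    fun x => ⟨le_min ENNReal.toReal_nonneg ((hv x).1.trans (hv x).2), min_le_right _ _⟩,
    fun g hg hgv => ?_⟩
  have hgood : p {x | g x ≠ 0} := by
    refine ⟨(hg (measurableSet_singleton 0)).compl, ?_⟩
    have h : ({x | g x ≠ 0}.indicator fun x => ENNReal.ofReal (v x)) =
        fun x => ENNReal.ofReal (‖g x * v x‖ / ‖g x‖) := by
      ext x
      by_cases hx : g x = 0
      · simp [hx]
      · rw [Set.indicator_of_mem (show x ∈ {x | g x ≠ 0} from hx), norm_mul,
          mul_div_cancel_left₀ _ (norm_ne_zero_iff.2 hx), Complex.norm_real,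
          Real.norm_of_nonneg (hv x).1]
    rw [h]
    exact ENNReal.measurable_ofReal.comp_aemeasurable
      (hgv.norm.aemeasurable.div hg.norm.aemeasurable)
  filter_upwards [hN.ae_eq_mk, measure_eq_zero_iff_ae_notMem.1 (hmax _ hgood)] with x hx hxN
  by_cases hgx : g x = 0
  · simp [hgx]
  have hxN' : x ∈ N := by_contra fun h => hxN ⟨hgx, h⟩
  rw [← hx, Set.indicator_of_mem hxN', ENNReal.toReal_ofReal (hv x).1, min_eq_left (hv x).2]

end MeasurableProxy

section Kernel

variable {α β : Type*} [MeasurableSpace α] [MeasurableSpace β] {μ : Measure α} {ν : Measure β}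
  {Q : α → β → ℂ} {M : ℝ}

-- The Bochner integral is `0` at the `x` where `y ↦ ‖Q x y‖ * ‖f y‖` is not integrable, so this
-- bound alone does not make `∫⁻ y, ‖Q x y‖ₑ * ‖f y‖ₑ ∂ν` finite almost everywhere.
def IsAbsBoundedKernel (Q : α → β → ℂ) (μ : Measure α) (ν : Measure β) (M : ℝ) : Prop :=
  ∀ f : β → ℂ, MemLp f 2 ν →
    eLpNorm (fun x => ∫ y, ‖Q x y‖ * ‖f y‖ ∂ν) 2 μ ≤ ENNReal.ofReal M * eLpNorm f 2 ν

lemma setLIntegral_lintegral_sq_le (hQ : Measurable (Function.uncurry Q))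
    (hM : IsAbsBoundedKernel Q μ ν M) {f : β → ℂ} (hf : MemLp f 2 ν) {S : Set α}
    (hS : MeasurableSet S) (hfin : ∀ x ∈ S, ∫⁻ y, ‖Q x y‖ₑ * ‖f y‖ₑ ∂ν < ∞) :
    ∫⁻ x in S, (∫⁻ y, ‖Q x y‖ₑ * ‖f y‖ₑ ∂ν) ^ 2 ∂μ ≤ (ENNReal.ofReal M * eLpNorm f 2 ν) ^ 2 := by
  set h := fun x => ∫ y, ‖Q x y‖ * ‖f y‖ ∂ν
  have heq : ∀ x ∈ S, ∫⁻ y, ‖Q x y‖ₑ * ‖f y‖ₑ ∂ν = ‖h x‖ₑ := fun x hx => by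
    have hint : Integrable (fun y => ‖Q x y‖ * ‖f y‖) ν :=
      ⟨((hQ.comp measurable_prodMk_left).norm.aestronglyMeasurable.mul hf.1.norm),
        by simpa [HasFiniteIntegral, enorm_mul] using hfin x hx⟩
    rw [Real.enorm_of_nonneg (integral_nonneg fun y => by positivity),
      ofReal_integral_eq_lintegral_ofReal hint (.of_forall fun y => by positivity)]
    simp [ENNReal.ofReal_mul, ofReal_norm]
  calc ∫⁻ x in S, (∫⁻ y, ‖Q x y‖ₑ * ‖f y‖ₑ ∂ν) ^ 2 ∂μ = ∫⁻ x in S, ‖h x‖ₑ ^ 2 ∂μ :=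
        setLIntegral_congr_fun hS fun x hx => by rw [heq x hx]
    _ ≤ ∫⁻ x, ‖h x‖ₑ ^ 2 ∂μ := setLIntegral_le_lintegral _ _
    _ = eLpNorm h 2 μ ^ 2 := by
        simpa using (eLpNorm_nnreal_pow_eq_lintegral (f := h) (μ := μ) (p := 2) two_ne_zero).symm
    _ ≤ (ENNReal.ofReal M * eLpNorm f 2 ν) ^ 2 := by gcongr; exact hM f hf

lemma ae_lintegral_lt_top_of_forall_setLIntegral_lt_top [SFinite ν]
    (hQ : Measurable (Function.uncurry Q)) (hM : IsAbsBoundedKernel Q μ ν M) {f : β → ℂ}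
    (hfm : Measurable f) (hf : MemLp f 2 ν) {B : ℕ → Set β} (hBm : ∀ n, MeasurableSet (B n))
    (hB : Monotone B) (hBU : ⋃ n, B n = Set.univ) :
    ∀ᵐ x ∂μ, (∀ n, ∫⁻ y in B n, ‖Q x y‖ₑ * ‖f y‖ₑ ∂ν < ∞) →
      ∫⁻ y, ‖Q x y‖ₑ * ‖f y‖ₑ ∂ν < ∞ := by
  set G : ℕ → α → ℝ≥0∞ := fun n x => ∫⁻ y in B n, ‖Q x y‖ₑ * ‖f y‖ₑ ∂ν
  have hGm : ∀ n, Measurable (G n) := fun n =>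
    (hQ.enorm.mul (hfm.enorm.comp measurable_snd)).lintegral_prod_right'
  have hG_indicator : ∀ n x, G n x = ∫⁻ y, ‖Q x y‖ₑ * ‖(B n).indicator f y‖ₑ ∂ν := fun n x => by
    simp only [G]
    rw [← lintegral_indicator (hBm n)]
    refine lintegral_congr fun y => ?_
    by_cases hy : y ∈ B n <;> simp [hy]
  -- On `T` the Bochner integrals in the kernel bound are the `G n x`, so the bound controls them.
  set T := ⋂ n, {x | G n x < ∞}
  have hT : MeasurableSet T :=
    MeasurableSet.iInter fun n => measurableSet_lt (hGm n) measurable_const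
  have hbound : ∀ n, ∫⁻ x in T, G n x ^ 2 ∂μ ≤ (ENNReal.ofReal M * eLpNorm f 2 ν) ^ 2 := by
    intro n
    simp_rw [hG_indicator n]
    refine (setLIntegral_lintegral_sq_le hQ hM (hf.indicator (hBm n)) hT
      fun x hx => hG_indicator n x ▸ Set.mem_iInter.1 hx n).trans ?_
    gcongr
    exact eLpNorm_indicator_le f
  have hsup : ∫⁻ x in T, ⨆ n, G n x ^ 2 ∂μ ≠ ∞ := by
    rw [lintegral_iSup (fun n => (hGm n).pow_const 2)
      fun n m hnm x => pow_le_pow_left' (lintegral_mono_set (hB hnm)) 2]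
    exact ne_top_of_le_ne_top (by finiteness [hf.2.ne]) (iSup_le hbound)
  filter_upwards [(ae_restrict_iff' hT).1
    (ae_lt_top (Measurable.iSup fun n => (hGm n).pow_const 2) hsup)] with x hx hfin
  replace hx := hx (Set.mem_iInter.2 hfin)
  have hlim : ∫⁻ y, ‖Q x y‖ₑ * ‖f y‖ₑ ∂ν = ⨆ n, G n x := by
    rw [← setLIntegral_iUnion_of_directed _ hB.directed_le, hBU, Measure.restrict_univ]
  simpa [hlim, ← ENNReal.iSup_pow] using hx

end Kernel

section Resolvent

variable {E : Type*} [NormedAddCommGroup E] [MeasurableSpace E] {ν : Measure E}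
  [NullSingletonClass ν] {lam : ℝ}

lemma integrable_mul_Fext_sub_and_integral_eq {g : E → ℂ} (hg₀ : ∫ y, g y ∂ν = 0)
    (hg : Integrable (fun y => g y * Ffun (lam * ‖y‖)) ν → Integrable g ν) (hlam : 0 < lam) (z : E)
    (hint : Integrable (fun y => g y * (Ffun (lam * ‖z - y‖) - Ffun (lam * ‖z‖))) ν) :
    Integrable (fun y => g y * (Fext (lam * ‖z - y‖) - Fext (lam * ‖z‖))) ν ∧
      ∫ y, g y * (Ffun (lam * ‖z - y‖) - Ffun (lam * ‖z‖)) ∂ν =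
        ∫ y, g y * (Fext (lam * ‖z - y‖) - Fext (lam * ‖z‖)) ∂ν := by
  have hFext : ∀ᵐ y ∂ν, Fext (lam * ‖z - y‖) = Ffun (lam * ‖z - y‖) := by
    filter_upwards [Measure.ae_ne ν z] with y hy
    exact Fext_of_ne_zero (mul_pos hlam (norm_pos_iff.2 (sub_ne_zero.2 hy.symm))).ne'
  rcases eq_or_ne z 0 with rfl | hz
  · have hgF : Integrable (fun y => g y * Ffun (lam * ‖y‖)) ν := by
      simpa [Ffun] using hint
    have hg1 := (hg hgF).const_mul (1 + Complex.I)
    have hae : (fun y => g y * Ffun (lam * ‖y‖) - (1 + Complex.I) * g y) =ᵐ[ν]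
        fun y => g y * (Fext (lam * ‖0 - y‖) - Fext (lam * ‖(0 : E)‖)) := by
      filter_upwards [hFext] with y hy
      rw [hy]
      simp [Fext]
      ring
    refine ⟨(hgF.sub hg1).congr hae, ?_⟩
    rw [← integral_congr_ae hae, integral_sub hgF hg1, integral_const_mul, hg₀]
    simp [Ffun]
  · have hz' : Fext (lam * ‖z‖) = Ffun (lam * ‖z‖) :=
      Fext_of_ne_zero (mul_pos hlam (norm_pos_iff.2 hz)).ne'
    have hae : (fun y => g y * (Ffun (lam * ‖z - y‖) - Ffun (lam * ‖z‖))) =ᵐ[ν]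
        fun y => g y * (Fext (lam * ‖z - y‖) - Fext (lam * ‖z‖)) := by
      filter_upwards [hFext] with y hy
      rw [hy, hz']
    exact ⟨hint.congr hae, integral_congr_ae hae⟩

variable [BorelSpace E]

lemma setLIntegral_closedBall_le_exp_mul (hlam : 0 < lam) (g : E → ℂ) (R : ℝ) :
    ∫⁻ y in Metric.closedBall 0 R, ‖g y‖ₑ ∂ν ≤
      ENNReal.ofReal (Real.exp (lam * R)) * ∫⁻ y, ‖g y * Ffun (lam * ‖y‖)‖ₑ ∂ν := by
  rw [← lintegral_const_mul' _ _ ENNReal.ofReal_ne_top]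
  refine (setLIntegral_mono_ae' Metric.isClosed_closedBall.measurableSet ?_).trans
    (setLIntegral_le_lintegral _ _)
  filter_upwards [Measure.ae_ne ν 0] with y hy0 hy
  rw [← ofReal_norm, ← ofReal_norm, ← ENNReal.ofReal_mul (Real.exp_pos _).le, norm_mul,
    mul_left_comm]
  refine ENNReal.ofReal_le_ofReal (le_mul_of_one_le_right (norm_nonneg _)
    (one_le_exp_mul_norm_Ffun (mul_pos hlam (norm_pos_iff.2 hy0)) ?_))
  gcongr
  simpa using hy

variable {α : Type*} [MeasurableSpace α] {μ : Measure α} [SFinite ν]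
  {Q : α → E → ℂ} {M : ℝ} {v W : E → ℝ}

lemma ae_integrable_of_integrable_mul_Ffun (hQ : Measurable (Function.uncurry Q))
    (hM : IsAbsBoundedKernel Q μ ν M) (hWm : Measurable W)
    (hW : MemLp (fun y => (W y : ℂ)) 2 ν)
    (hvW : ∀ g : E → ℂ, Measurable g → AEStronglyMeasurable (fun y => g y * v y) ν →
      (fun y => g y * v y) =ᵐ[ν] fun y => g y * W y) (hlam : 0 < lam) :
    ∀ᵐ x ∂μ, Integrable (fun y => Q x y * v y * Ffun (lam * ‖y‖)) ν →
      Integrable (fun y => Q x y * v y) ν := by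
  filter_upwards [ae_lintegral_lt_top_of_forall_setLIntegral_lt_top hQ hM (by fun_prop) hW
    (fun n => Metric.isClosed_closedBall.measurableSet)
    (fun m n h => Metric.closedBall_subset_closedBall (by exact_mod_cast h))
    (Metric.iUnion_closedBall_nat 0)] with x hfin hint
  have hF_ne : ∀ᵐ y ∂ν, Ffun (lam * ‖y‖) ≠ 0 := by
    filter_upwards [Measure.ae_ne ν 0] with y hy
    exact norm_ne_zero_iff.1 (ne_of_gt (Real.exp_pos _ |>.trans_le
      (exp_neg_le_norm_Ffun (mul_pos hlam (norm_pos_iff.2 hy)))))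
  have hmeas : AEStronglyMeasurable (fun y => Q x y * v y) ν := by
    have hFm : Measurable fun y : E => Ffun (lam * ‖y‖) := by fun_prop
    refine (hint.1.mul hFm.inv.aestronglyMeasurable).congr ?_
    filter_upwards [hF_ne] with y hy
    simp [mul_inv_cancel_right₀ hy]
  have hvW_x : ∀ᵐ y ∂ν, ‖Q x y * v y‖ₑ = ‖Q x y‖ₑ * ‖(W y : ℂ)‖ₑ := by
    filter_upwards [hvW (Q x) (hQ.comp measurable_prodMk_left) hmeas] with y hy
    rw [hy, enorm_mul]
  have hball : ∀ n : ℕ, ∫⁻ y in Metric.closedBall 0 n, ‖Q x y‖ₑ * ‖(W y : ℂ)‖ₑ ∂ν < ∞ := by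
    intro n
    rw [← lintegral_congr_ae (ae_restrict_of_ae hvW_x)]
    exact (setLIntegral_closedBall_le_exp_mul hlam _ n).trans_lt
      (ENNReal.mul_lt_top ENNReal.ofReal_lt_top hint.2)
  exact ⟨hmeas, (lintegral_congr_ae hvW_x).trans_lt (hfin hball)⟩

lemma ae_norm_integral_mul_Ffun_sub_le (hQ : Measurable (Function.uncurry Q))
    (hM : IsAbsBoundedKernel Q μ ν M) (hWm : Measurable W) (hW : MemLp (fun y => (W y : ℂ)) 2 ν)
    (hvW : ∀ g : E → ℂ, Measurable g → AEStronglyMeasurable (fun y => g y * v y) ν →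
      (fun y => g y * v y) =ᵐ[ν] fun y => g y * W y)
    (hQv : ∀ x, ∫ y, Q x y * v y ∂ν = 0) (hlam : 0 < lam) (z : E) :
    ∀ᵐ x ∂μ, ‖∫ y, Q x y * v y * (Ffun (lam * ‖z - y‖) - Ffun (lam * ‖z‖)) ∂ν‖ ≤
      ∫ y, ‖Q x y‖ * ‖(W y : ℂ) * (Fext (lam * ‖z - y‖) - Fext (lam * ‖z‖))‖ ∂ν := by
  filter_upwards [ae_integrable_of_integrable_mul_Ffun hQ hM hWm hW hvW hlam] with x hx
  by_cases hint : Integrable (fun y => Q x y * v y * (Ffun (lam * ‖z - y‖) - Ffun (lam * ‖z‖))) ν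
  swap
  · rw [integral_undef hint, norm_zero]
    exact integral_nonneg fun y => by positivity
  set D := fun y => Fext (lam * ‖z - y‖) - Fext (lam * ‖z‖)
  have hDm : Measurable D := (measurable_Fext.comp (f := fun y : E => lam * ‖z - y‖)
    (by fun_prop)).sub measurable_const
  obtain ⟨hintD, heq⟩ := integrable_mul_Fext_sub_and_integral_eq (g := fun y => Q x y * v y)
    (hQv x) hx hlam z (by simpa only [mul_assoc] using hint)
  have hvW_x := hvW (fun y => Q x y * D y) ((hQ.comp measurable_prodMk_left).mul hDm)
    (hintD.1.congr (.of_forall fun y => by ring))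
  simp only [mul_assoc] at heq ⊢
  rw [heq]
  refine (norm_integral_le_integral_norm _).trans_eq (integral_congr_ae ?_)
  filter_upwards [hvW_x] with y hy
  rw [show Q x y * (v y * D y) = Q x y * D y * v y by ring, hy]
  simp only [D, norm_mul]
  ring

lemma eLpNorm_integral_mul_Ffun_sub_le (hQ : Measurable (Function.uncurry Q))
    (hM : IsAbsBoundedKernel Q μ ν M) (hWm : Measurable W) (hW₀ : ∀ y, 0 ≤ W y)
    (hW : MemLp (fun y => (W y : ℂ)) 2 ν) (hWnorm : MemLp (fun y => ‖y‖ * W y) 2 ν)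
    (hvW : ∀ g : E → ℂ, Measurable g → AEStronglyMeasurable (fun y => g y * v y) ν →
      (fun y => g y * v y) =ᵐ[ν] fun y => g y * W y)
    (hQv : ∀ x, ∫ y, Q x y * v y ∂ν = 0) (hlam : 0 < lam) (z : E) :
    eLpNorm (fun x => ∫ y, Q x y * v y * (Ffun (lam * ‖z - y‖) - Ffun (lam * ‖z‖)) ∂ν) 2 μ ≤
      ENNReal.ofReal M * (ENNReal.ofReal (2 * lam) * eLpNorm (fun y => ‖y‖ * W y) 2 ν) := by
  set fs := fun y => (W y : ℂ) * (Fext (lam * ‖z - y‖) - Fext (lam * ‖z‖))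
  have hfs : ∀ y, ‖fs y‖ ≤ 2 * lam * ‖‖y‖ * W y‖ := fun y =>
    norm_ofReal_mul_Fext_sub_le (hW₀ y) hlam.le z y
  calc _ ≤ eLpNorm (fun x => ∫ y, ‖Q x y‖ * ‖fs y‖ ∂ν) 2 μ :=
        eLpNorm_mono_ae_real (ae_norm_integral_mul_Ffun_sub_le hQ hM hWm hW hvW hQv hlam z)
    _ ≤ ENNReal.ofReal M * eLpNorm fs 2 ν := hM fs (hWnorm.of_le_mul (by fun_prop) (.of_forall hfs))
    _ ≤ _ := by
        gcongr
        exact eLpNorm_le_mul_eLpNorm_of_ae_le_mul (.of_forall hfs) 2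

end Resolvent

section Weight

variable {E : Type*} [NormedAddCommGroup E] [NormedSpace ℝ E] [FiniteDimensional ℝ E]
  [MeasurableSpace E] [BorelSpace E] {μ : Measure E} [μ.IsAddHaarMeasure] {W : E → ℝ} {s : ℝ}

lemma memLp_two_one_add_norm_rpow_neg {r : ℝ} (hr : (Module.finrank ℝ E : ℝ) < 2 * r) :
    MemLp (fun x : E => (1 + ‖x‖) ^ (-r)) 2 μ := by
  refine (memLp_two_iff_integrable_sq (by fun_prop : Measurable _).aestronglyMeasurable).2 ?_
  refine (integrable_one_add_norm hr).congr (.of_forall fun x => ?_)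
  dsimp only
  rw [← Real.rpow_natCast, ← Real.rpow_mul (by positivity)]
  push_cast
  ring_nf

lemma memLp_ofReal_of_le_one_add_norm_rpow_neg (hWm : Measurable W)
    (hW : ∀ x, 0 ≤ W x ∧ W x ≤ (1 + ‖x‖) ^ (-s)) (hs : (Module.finrank ℝ E : ℝ) < 2 * s) :
    MemLp (fun x => (W x : ℂ)) 2 μ := by
  refine (memLp_two_one_add_norm_rpow_neg hs).of_le (by fun_prop) (.of_forall fun x => ?_)
  rw [Complex.norm_real, Real.norm_of_nonneg (hW x).1, Real.norm_of_nonneg (by positivity)]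
  exact (hW x).2

lemma memLp_norm_mul_of_le_one_add_norm_rpow_neg (hWm : Measurable W)
    (hW : ∀ x, 0 ≤ W x ∧ W x ≤ (1 + ‖x‖) ^ (-s)) (hs : (Module.finrank ℝ E : ℝ) < 2 * (s - 1)) :
    MemLp (fun x => ‖x‖ * W x) 2 μ := by
  refine (memLp_two_one_add_norm_rpow_neg (r := s - 1) hs).of_le (by fun_prop)
    (.of_forall fun x => ?_)
  rw [Real.norm_of_nonneg (mul_nonneg (norm_nonneg x) (hW x).1),
    Real.norm_of_nonneg (by positivity), neg_sub, sub_eq_neg_add,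
    Real.rpow_add_one (by positivity), mul_comm]
  exact mul_le_mul (hW x).2 (by linarith) (norm_nonneg x) (by positivity)

end Weight

/-- Lemma 5.2, first bound: if `Q` has an absolutely bounded kernel on `L²` and
`Qv = 0`, then `sup_y ‖[Qv R⁺(H₀,λ⁴)](·,y)‖_{L²} ≲ 1` uniformly in `λ > 0`. -/
theorem stmt17
    (ε : ℝ) (hε : 0 < ε)
    (v : EuclideanSpace ℝ (Fin 3) → ℝ)
    (hv : ∀ x, 0 ≤ v x ∧ v x ≤ (1 + ‖x‖) ^ (-(5 / 2 : ℝ) - ε))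
    (Q : EuclideanSpace ℝ (Fin 3) → EuclideanSpace ℝ (Fin 3) → ℂ)
    (hQmeas : Measurable (Function.uncurry Q))
    (habs : ∃ M : ℝ, ∀ f : EuclideanSpace ℝ (Fin 3) → ℂ, MemLp f 2 volume →
      eLpNorm (fun y2 => ∫ y1, ‖Q y2 y1‖ * ‖f y1‖) 2 volume
        ≤ ENNReal.ofReal M * eLpNorm f 2 volume)
    (hQv : ∀ y2, ∫ y1, Q y2 y1 * (v y1 : ℂ) = 0) :
    ∃ C : ℝ, 0 < C ∧ ∀ lam : ℝ, 0 < lam → ∀ y : EuclideanSpace ℝ (Fin 3),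
      eLpNorm (fun y2 => (1 / (8 * π * lam : ℝ) : ℂ) *
          ∫ y1, Q y2 y1 * (v y1 : ℂ) * (Ffun (lam * ‖y - y1‖) - Ffun (lam * ‖y‖)))
        2 volume ≤ ENNReal.ofReal C := by
  obtain ⟨M, hM⟩ := habs
  obtain ⟨W, hWm, hWV, hvW⟩ := exists_measurable_le_forall_mul_ae_eq (μ := volume)
    (by fun_prop : Measurable fun x : EuclideanSpace ℝ (Fin 3) => (1 + ‖x‖) ^ (-(5 / 2 : ℝ) - ε)) hv
  have hWV' : ∀ x, 0 ≤ W x ∧ W x ≤ (1 + ‖x‖) ^ (-(5 / 2 + ε)) := by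
    simpa only [neg_add'] using hWV
  have hdim : (Module.finrank ℝ (EuclideanSpace ℝ (Fin 3)) : ℝ) = 3 := by simp
  have hW := memLp_ofReal_of_le_one_add_norm_rpow_neg (μ := volume) hWm hWV' (by linarith)
  have hWnorm := memLp_norm_mul_of_le_one_add_norm_rpow_neg (μ := volume) hWm hWV' (by linarith)
  set K := (eLpNorm (fun y => ‖y‖ * W y) 2 volume).toReal
  refine ⟨max M 0 * K / (4 * π) + 1, by positivity, fun lam hlam y => ?_⟩
  have hI := eLpNorm_integral_mul_Ffun_sub_le (μ := volume) hQmeas hM hWm (fun x => (hWV x).1) hW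
    hWnorm hvW hQv hlam y
  rw [← ENNReal.ofReal_toReal hWnorm.eLpNorm_ne_top] at hI
  calc _ ≤ ENNReal.ofReal (1 / (8 * π * lam)) * eLpNorm (fun y2 =>
        ∫ y1, Q y2 y1 * (v y1 : ℂ) * (Ffun (lam * ‖y - y1‖) - Ffun (lam * ‖y‖))) 2 volume := by
        refine eLpNorm_le_mul_eLpNorm_of_ae_le_mul (.of_forall fun y2 => ?_) 2
        simp [abs_of_pos hlam, abs_of_pos Real.pi_pos]
    _ ≤ ENNReal.ofReal (1 / (8 * π * lam)) *
        (ENNReal.ofReal (max M 0) * (ENNReal.ofReal (2 * lam) * ENNReal.ofReal K)) := by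
        gcongr
        exact hI.trans (by gcongr; exact le_max_left M 0)
    _ ≤ ENNReal.ofReal (max M 0 * K / (4 * π) + 1) := by
        rw [← ENNReal.ofReal_mul (by positivity), ← ENNReal.ofReal_mul (by positivity),
          ← ENNReal.ofReal_mul (by positivity)]
        refine ENNReal.ofReal_le_ofReal (le_of_eq_of_le ?_ (le_add_of_nonneg_right zero_le_one))
        field_simp
        ring
end
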